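/- Let L be a finite distributive lattice. Define Γ(x) = ι(x) \ ι(x_↓), where ι(z) is the set of join-irreducibles below z and x_↓ is the meet of the lower covers of x. Then the family {Γ(x) : x ∈ L} is closed under taking subsets: for every x ∈ L and every S ⊆ Γ(x) there exists z ∈ L with Γ(z) = S. -/

import Mathlib

open Classical in
/-- The nucleus `x₊` of `x`: the meet of all lower covers of `x`, with the
convention `x₊ = x` when `x` has no lower cover. -/
noncomputable def nucleus {L : Type*} [Lattice L] [Fintype L] (x : L) : L :=
  if h : ({y : L | y ⋖ x}).toFinset.Nonempty then ({y : L | y ⋖ x}).toFinset.inf' h id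
  else x

/-- The set of join-irreducible elements of `L` lying below `z`. -/
def iotaSet {L : Type*} [Lattice L] (z : L) : Set L := {j | SupIrred j ∧ j ≤ z}

/-- The canonical join representation `Γ(x) = ι(x) \ ι(x₊)` of `x`. -/
noncomputable def gammaSet {L : Type*} [Lattice L] [Fintype L] (x : L) : Set L :=
  iotaSet x \ iotaSet (nucleus x)

section Aux

open Classical

variable {L : Type*} [DistribLattice L] [Fintype L]

/-- In a finite lattice, below any strict inequality there is a lower cover. -/
private lemma aux_exists_le_covby {y x : L} (h : y < x) : ∃ w, y ≤ w ∧ w ⋖ x := by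
  obtain ⟨w, hw, hmax⟩ :=
    (Finset.univ.filter (fun w : L => y ≤ w ∧ w < x)).exists_maximal
      ⟨y, by simp [h]⟩
  simp only [Finset.mem_filter, Finset.mem_univ, true_and] at hw hmax
  exact ⟨w, hw.1, hw.2, fun u h1 h2 => h1.not_ge (hmax ⟨hw.1.trans h1.le, h2⟩ h1.le)⟩

private lemma aux_nucleus_le {x y : L} (h : y ⋖ x) : nucleus x ≤ y := by
  have hmem : y ∈ ({y : L | y ⋖ x}).toFinset := by simp [h]
  have hne : ({y : L | y ⋖ x}).toFinset.Nonempty := ⟨y, hmem⟩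
  rw [nucleus, dif_pos hne]
  exact Finset.inf'_le id hmem

private lemma aux_le_nucleus {x j : L} (hjx : j ≤ x) (h : ∀ y, y ⋖ x → j ≤ y) :
    j ≤ nucleus x := by
  rw [nucleus]
  split_ifs with hne
  · exact Finset.le_inf' hne id (fun y hy => h y (by simpa using hy))
  · exact hjx

/-- Key characterization: a join-irreducible `j ≤ x` lies below the nucleus of `x`
iff it is not maximal among join-irreducibles below `x`. -/
private lemma aux_le_nucleus_iff {j x : L} (hj : SupIrred j) (hjx : j ≤ x) :
    j ≤ nucleus x ↔ ∃ j', SupIrred j' ∧ j < j' ∧ j' ≤ x := by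
  haveI : Nonempty L := ⟨x⟩
  letI : OrderBot L := Fintype.toOrderBot L
  constructor
  · intro hn
    by_cases hc : ∃ y, y ⋖ x
    · obtain ⟨y, hy⟩ := hc
      have hnx : nucleus x < x := (aux_nucleus_le hy).trans_lt hy.lt
      by_contra hcon
      push_neg at hcon
      obtain ⟨s, hsup, hirr⟩ := exists_supIrred_decomposition x
      have hnotle : ∀ i ∈ s, i ≠ j → ¬ j ≤ i := by
        intro i hi hne hle
        exact hcon i (hirr hi) (lt_of_le_of_ne hle (Ne.symm hne))
          (hsup ▸ Finset.le_sup (f := id) hi)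
      have hjs : j ∈ s := by
        by_contra hjs
        have : j ≤ s.sup id := hsup ▸ hjx
        obtain ⟨i, hi, hji⟩ := (hj.supPrime.le_finset_sup).mp this
        exact hnotle i hi (fun h => hjs (h ▸ hi)) hji
      set y0 : L := (s.erase j).sup id with hy0
      have hxeq : j ⊔ y0 = x := by
        have h' : (insert j (s.erase j)).sup id = x := by
          rw [Finset.insert_erase hjs, hsup]
        rw [Finset.sup_insert] at h'
        exact h'
      have hjy0 : ¬ j ≤ y0 := by
        intro hle
        obtain ⟨i, hi, hji⟩ := (hj.supPrime.le_finset_sup).mp hle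
        exact hnotle i (Finset.mem_of_mem_erase hi) (Finset.ne_of_mem_erase hi) hji
      have hy0x : y0 < x := by
        refine lt_of_le_of_ne (le_of_sup_eq ?_) (fun h => hjy0 (h ▸ hjx))
        · rw [sup_comm] at hxeq
          calc y0 ⊔ x = y0 ⊔ (y0 ⊔ j) := by rw [hxeq]
          _ = y0 ⊔ j := by rw [← sup_assoc, sup_idem]
          _ = x := hxeq
      obtain ⟨w, hw1, hw2⟩ := aux_exists_le_covby hy0x
      have hjw : j ≤ w := hn.trans (aux_nucleus_le hw2)
      have : x ≤ w := hxeq ▸ sup_le hjw (hy0.symm ▸ hw1)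
      exact absurd this hw2.lt.not_ge
    · push_neg at hc
      exfalso
      have hmin : IsMin x := by
        intro b hb
        rcases eq_or_lt_of_le hb with h | h
        · exact h.ge
        · obtain ⟨w, _, hw2⟩ := aux_exists_le_covby h
          exact absurd hw2 (hc w)
      have : j = x := le_antisymm hjx (hmin hjx)
      exact hj.1 (this ▸ hmin)
  · rintro ⟨j', hj', hlt, hle⟩
    apply aux_le_nucleus hjx
    intro y hy
    by_contra hny
    have hx : y ⊔ j = x := by
      have h1 : y < y ⊔ j := lt_of_le_of_ne le_sup_left (fun h => hny (h ▸ le_sup_right))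
      rcases eq_or_lt_of_le (sup_le hy.le hjx) with h | h
      · exact h
      · exact absurd h (hy.2 h1)
    rcases hj'.supPrime.le_sup.mp (hx ▸ hle) with h | h
    · exact hny (hlt.le.trans h)
    · exact absurd h hlt.not_ge

end Aux

/-- In a finite distributive lattice the family `{Γ(x) : x ∈ L}` is closed under taking
subsets: the canonical join representations form a simplicial complex. -/
theorem gamma_downward_closed {L : Type*} [DistribLattice L] [Fintype L]
    (x : L) (S : Set L) (hS : S ⊆ gammaSet x) : ∃ z : L, gammaSet z = S := by
  classical
  haveI : Nonempty L := ⟨x⟩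
  letI : OrderBot L := Fintype.toOrderBot L
  have hmemS : ∀ k ∈ S, SupIrred k ∧ k ≤ x ∧ ¬ k ≤ nucleus x := by
    intro k hk
    have := hS hk
    simp only [gammaSet, Set.mem_diff, iotaSet, Set.mem_setOf_eq, not_and] at this
    exact ⟨this.1.1, this.1.2, fun h => this.2 this.1.1 h⟩
  set z : L := S.toFinset.sup id with hz
  refine ⟨z, ?_⟩
  ext j
  simp only [gammaSet, Set.mem_diff, iotaSet, Set.mem_setOf_eq, not_and]
  constructor
  · rintro ⟨⟨hj, hjz⟩, hnot⟩
    obtain ⟨k, hk, hjk⟩ := (hj.supPrime.le_finset_sup).mp (hz ▸ hjz)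
    rw [Set.mem_toFinset] at hk
    rcases eq_or_lt_of_le hjk with h | h
    · exact h ▸ hk
    · exfalso
      have hkz : k ≤ z := Finset.le_sup (f := id) (Set.mem_toFinset.mpr hk)
      exact hnot hj ((aux_le_nucleus_iff hj hjz).mpr ⟨k, (hmemS k hk).1, h, hkz⟩)
  · intro hjS
    obtain ⟨hj, hjx, hjn⟩ := hmemS j hjS
    have hjz : j ≤ z := Finset.le_sup (f := id) (Set.mem_toFinset.mpr hjS)
    refine ⟨⟨hj, hjz⟩, fun _ hle => ?_⟩
    obtain ⟨j', hj', hlt, hj'z⟩ := (aux_le_nucleus_iff hj hjz).mp hle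
    obtain ⟨k, hk, hj'k⟩ := (hj'.supPrime.le_finset_sup).mp (hz ▸ hj'z)
    rw [Set.mem_toFinset] at hk
    have hkx : k ≤ x := (hmemS k hk).2.1
    exact hjn ((aux_le_nucleus_iff hj hjx).mpr ⟨k, (hmemS k hk).1, lt_of_lt_of_le hlt hj'k, hkx⟩)
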